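/- Let J ∈ ℝ. There exists a 2π-periodic function h : ℝ → ℝ of class C³ with h(θ) > 0 for all θ satisfying h(θ)²/2 + h(θ)³·(h'(θ) + h'''(θ)) = J for all θ if and only if J > 0. Moreover, for any J > 0 the constant function h(θ) = √(2J) is such a solution. -/

import Mathlib

/-!
At a critical point of the periodic function `h + h''` one has `h' + h''' = 0`, so the equation
reduces there to `J = h² / 2 > 0`. Conversely, a positive constant `h` solves the equation with
`J = h² / 2`.
-/

open Real

namespace Function.Periodic

variable {𝕜 F : Type*} [NontriviallyNormedField 𝕜] [NormedAddCommGroup F] [NormedSpace 𝕜 F]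
  {f : 𝕜 → F} {T : 𝕜}

protected theorem deriv (hf : Periodic f T) : Periodic (deriv f) T := fun x => by
  rw [← deriv_comp_add_const, funext hf]

protected theorem iteratedDeriv (hf : Periodic f T) (n : ℕ) : Periodic (iteratedDeriv n f) T := by
  induction n with
  | zero => simpa only [iteratedDeriv_zero] using hf
  | succ n ih => simpa only [iteratedDeriv_succ] using ih.deriv

end Function.Periodic

/-- Rolle's theorem over one period; no differentiability is needed since `deriv` vanishes
where `f` is not differentiable. -/
theorem Function.Periodic.exists_deriv_eq_zero {f : ℝ → ℝ} {T : ℝ} (hf : Function.Periodic f T)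
    (hT : T ≠ 0) (hc : Continuous f) : ∃ c, deriv f c = 0 := by
  have hT0 : f 0 = f T := by simpa only [zero_add] using (hf 0).symm
  rcases hT.lt_or_gt with hT | hT
  · obtain ⟨c, -, hc⟩ := _root_.exists_deriv_eq_zero hT hc.continuousOn hT0.symm
    exact ⟨c, hc⟩
  · obtain ⟨c, -, hc⟩ := _root_.exists_deriv_eq_zero hT hc.continuousOn hT0
    exact ⟨c, hc⟩

theorem Function.Periodic.exists_deriv_add_iteratedDeriv_three_eq_zero {h : ℝ → ℝ} {T : ℝ}
    (hp : Function.Periodic h T) (hT : T ≠ 0) (hh : ContDiff ℝ 3 h) :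
    ∃ c, deriv h c + iteratedDeriv 3 h c = 0 := by
  have hd : Differentiable ℝ h := hh.differentiable (by norm_num)
  have hd2 : Differentiable ℝ (iteratedDeriv 2 h) := hh.differentiable_iteratedDeriv 2 (by norm_num)
  obtain ⟨c, hc⟩ := (hp.add (hp.iteratedDeriv 2)).exists_deriv_eq_zero hT
    (hd.continuous.add hd2.continuous)
  refine ⟨c, ?_⟩
  rwa [deriv_add (hd c) (hd2 c), ← iteratedDeriv_succ] at hc

theorem stmt_2 (J : ℝ) :
    ((∃ h : ℝ → ℝ, Function.Periodic h (2 * π) ∧ ContDiff ℝ 3 h ∧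
        (∀ θ, 0 < h θ) ∧
        (∀ θ, (h θ) ^ 2 / 2 + (h θ) ^ 3 * (deriv h θ + iteratedDeriv 3 h θ) = J))
      ↔ 0 < J)
    ∧ (0 < J →
        (Function.Periodic (fun _ : ℝ => Real.sqrt (2 * J)) (2 * π) ∧
         ContDiff ℝ 3 (fun _ : ℝ => Real.sqrt (2 * J)) ∧
         (∀ θ : ℝ, 0 < (fun _ : ℝ => Real.sqrt (2 * J)) θ) ∧
         (∀ θ : ℝ, ((fun _ : ℝ => Real.sqrt (2 * J)) θ) ^ 2 / 2
            + ((fun _ : ℝ => Real.sqrt (2 * J)) θ) ^ 3 *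
              (deriv (fun _ : ℝ => Real.sqrt (2 * J)) θ
                + iteratedDeriv 3 (fun _ : ℝ => Real.sqrt (2 * J)) θ) = J))) := by
  refine (and_iff_right_of_imp fun hsol => ⟨?pos, fun hJ => ⟨_, hsol hJ⟩⟩).2 fun hJ => ?sol
  case pos =>
    rintro ⟨h, hp, hh, hpos, hflux⟩
    obtain ⟨c, hc⟩ := hp.exists_deriv_add_iteratedDeriv_three_eq_zero two_pi_pos.ne' hh
    have hJc : h c ^ 2 / 2 = J := by simpa only [hc, mul_zero, add_zero] using hflux c
    have hhc : 0 < h c := hpos c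
    rw [← hJc]
    positivity
  case sol =>
    have h2J : 0 ≤ 2 * J := by linarith
    refine ⟨fun _ => rfl, contDiff_const, fun _ => sqrt_pos.2 (by linarith), fun _ => ?_⟩
    simp only [deriv_const, iteratedDeriv_const, sq_sqrt h2J]
    norm_num
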